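/- arXiv:2212.14607 — 6 statements merged into one kernel-verified Lean document; each statement's English description precedes it below -/
import Mathlib

section
/- Let A be a 0-1 matrix over the positive integers that is uniformly column finite and has no zero columns (for every i there exists j with A(j,i) = 1). Fix positive integers m, n, p with 1 ≤ p ≤ m−1, and suppose that |L_p^i(m,n)| = |L_p^j(m,n)| for all i, j ∈ N(m−p+1,n), where L_p^i(m,n) := {α ∈ L_p(m,n) : α_p = i}. Then |L_p(m,n)| · |L(m−p,n)| ≤ I(m−p+1,n) · |L(m,n)|. -/
/-- A finite word is admissible for `A` if consecutive letters are linked by `A`. -/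
def Adm (A : ℕ+ → ℕ+ → Bool) (w : List ℕ+) : Prop :=
  List.Chain' (fun a b => A a b = true) w

/-- `L(m,n)`: admissible words of length `m` whose last letter is at most `n`. -/
def LWords (A : ℕ+ → ℕ+ → Bool) (m : ℕ) (n : ℕ+) : Set (List ℕ+) :=
  {w : List ℕ+ | w.length = m ∧ Adm A w ∧ ∀ x ∈ w.getLast?, x ≤ n}

/-- `L_p(m,n)`: length-`p` prefixes of words in `L(m,n)`. -/
def LPref (A : ℕ+ → ℕ+ → Bool) (p m : ℕ) (n : ℕ+) : Set (List ℕ+) :=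
  {u : List ℕ+ | u.length = p ∧ ∃ w ∈ LWords A m n, u <+: w}

/-- `ρ_A^{-1}(i) = {j : A(j,i) = 1}`. -/
def rhoInv (A : ℕ+ → ℕ+ → Bool) (i : ℕ+) : Set ℕ+ := {j : ℕ+ | A j i = true}

/-- `ρ_A^{-1}(B) = ⋃_{i ∈ B} ρ_A^{-1}(i)`. -/
def rhoInvSet (A : ℕ+ → ℕ+ → Bool) (B : Set ℕ+) : Set ℕ+ := ⋃ i ∈ B, rhoInv A i

/-- `N(1,n) = {1,…,n}` and `N(m+1,n) = ρ_A^{-1}(N(m,n))` (value at `0` is junk). -/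
def NSet (A : ℕ+ → ℕ+ → Bool) (n : ℕ+) : ℕ → Set ℕ+
  | 0 => ∅
  | 1 => {i : ℕ+ | i ≤ n}
  | (m + 2) => rhoInvSet A (NSet A n (m + 1))

/-- `I(m,n) = max N(m,n)` (as a supremum in `ℕ`). -/
noncomputable def ISup (A : ℕ+ → ℕ+ → Bool) (n : ℕ+) (m : ℕ) : ℕ :=
  sSup ((fun i : ℕ+ => (i : ℕ)) '' NSet A n m)

/-!
Cutting a word of `L(m,n)` after its `p`-th letter `i` identifies `L(m,n)` with the disjoint union,
over `i ∈ N(m-p+1,n)`, of `L_p^i(m,n) × S_i`, where `S_i` is the set of words of `L(m-p,n)` whose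
first letter may follow `i`. Since `A` has no zero columns, the `S_i` cover `L(m-p,n)`. Writing
`a_i = |L_p^i(m,n)|`, which is constant on `N = N(m-p+1,n)`, we get
`|L_p(m,n)| · |L(m-p,n)| ≤ (∑ a_i)(∑ |S_i|) = |N| · ∑ a_i |S_i| = |N| · |L(m,n)|`,
and `|N| ≤ I(m-p+1,n)`.
-/

lemma finsum_mem_mul_finsum_mem_of_eqOn {ι R : Type*} [CommSemiring R] {t : Set ι}
    (ht : t.Finite) {a : ι → R} (b : ι → R) (h : ∀ i ∈ t, ∀ j ∈ t, a i = a j) :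
    (∑ᶠ i ∈ t, a i) * ∑ᶠ i ∈ t, b i = t.ncard • ∑ᶠ i ∈ t, a i * b i := by
  simp only [finsum_mem_eq_finite_toFinset_sum _ ht, Set.ncard_eq_toFinset_card _ ht,
    Finset.sum_mul_sum, Finset.smul_sum]
  rw [Finset.sum_comm]
  refine Finset.sum_congr rfl fun j hj => ?_
  rw [← Finset.sum_const]
  refine Finset.sum_congr rfl fun i hi => ?_
  rw [h i (ht.mem_toFinset.mp hi) j (ht.mem_toFinset.mp hj)]

section Words

variable {A : ℕ+ → ℕ+ → Bool} {n : ℕ+}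

lemma NSet_succ {k : ℕ} (hk : 1 ≤ k) : NSet A n (k + 1) = rhoInvSet A (NSet A n k) := by
  obtain ⟨k, rfl⟩ := Nat.exists_eq_add_of_le' hk
  rfl

lemma mem_NSet_succ {k : ℕ} (hk : 1 ≤ k) {i h : ℕ+} (hh : h ∈ NSet A n k) (hA : A i h = true) :
    i ∈ NSet A n (k + 1) := by
  rw [NSet_succ hk]
  exact Set.mem_biUnion hh hA

lemma NSet_finite (hA : ∀ i, (rhoInv A i).Finite) : ∀ k, (NSet A n k).Finite
  | 0 => Set.finite_empty
  | 1 => Set.finite_Iic n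
  | k + 2 => (NSet_finite hA (k + 1)).biUnion fun i _ => hA i

lemma ncard_NSet_le_ISup (hA : ∀ i, (rhoInv A i).Finite) (k : ℕ) :
    (NSet A n k).ncard ≤ ISup A n k := by
  have hfin := (NSet_finite hA (n := n) k).image fun i : ℕ+ => (i : ℕ)
  calc (NSet A n k).ncard = ((fun i : ℕ+ => (i : ℕ)) '' NSet A n k).ncard :=
        (Set.ncard_image_of_injective _ PNat.coe_injective).symm
    _ ≤ (Set.Icc 1 (ISup A n k)).ncard := by
        refine Set.ncard_le_ncard ?_ (Set.finite_Icc _ _)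
        rintro _ ⟨i, hi, rfl⟩
        exact ⟨i.pos, le_csSup hfin.bddAbove ⟨i, hi, rfl⟩⟩
    _ = ISup A n k := by simp

lemma drop_mem_LWords {m : ℕ} {w : List ℕ+} (hw : w ∈ LWords A m n) (p : ℕ) :
    w.drop p ∈ LWords A (m - p) n := by
  obtain ⟨hl, hadm, hlast⟩ := hw
  refine ⟨by simp [hl], hadm.drop p, fun x hx => hlast x ?_⟩
  rw [List.getLast?_drop] at hx
  split_ifs at hx
  exacts [(Option.not_mem_none x hx).elim, hx]

lemma head_mem_NSet : ∀ {k : ℕ}, 1 ≤ k → ∀ {w : List ℕ+}, w ∈ LWords A k n →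
    ∀ h ∈ w.head?, h ∈ NSet A n k
  | 1, _, [a], ⟨_, _, hlast⟩, _, rfl => hlast a rfl
  | k + 2, _, a :: b :: t, hw, _, rfl => by
    have hbt := drop_mem_LWords hw 1
    exact mem_NSet_succ (Nat.le_add_left 1 k) (head_mem_NSet (Nat.le_add_left 1 k) hbt b rfl)
      (List.isChain_cons_cons.mp hw.2.1).1

lemma LWords_finite (hA : ∀ i, (rhoInv A i).Finite) : ∀ k, (LWords A k n).Finite
  | 0 => (Set.finite_singleton []).subset fun _ hw => List.length_eq_zero_iff.mp hw.1
  | k + 1 => by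
    refine (((NSet_finite hA (n := n) (k + 1)).prod (LWords_finite hA k)).image
      fun x => x.1 :: x.2).subset ?_
    rintro (_ | ⟨a, t⟩) hw
    · exact absurd hw.1 (by simp)
    · exact ⟨(a, t), ⟨head_mem_NSet (Nat.le_add_left 1 k) hw a rfl,
        drop_mem_LWords hw 1⟩, rfl⟩

lemma LPref_finite (hA : ∀ i, (rhoInv A i).Finite) (p m : ℕ) : (LPref A p m n).Finite := by
  refine ((LWords_finite hA (n := n) m).image (List.take p)).subset ?_
  rintro u ⟨hu, w, hw, huw⟩
  exact ⟨w, hw, by rw [List.prefix_iff_eq_take.mp huw, hu]⟩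

end Words

/-- `L_p^i(m,n)`. -/
def LPrefLast (A : ℕ+ → ℕ+ → Bool) (p m : ℕ) (n i : ℕ+) : Set (List ℕ+) :=
  {u ∈ LPref A p m n | u.getLast? = some i}

def LWordsAfter (A : ℕ+ → ℕ+ → Bool) (q : ℕ) (n i : ℕ+) : Set (List ℕ+) :=
  {v ∈ LWords A q n | ∃ h ∈ v.head?, A i h = true}

section Splitting

variable {A : ℕ+ → ℕ+ → Bool} {n : ℕ+} {p q : ℕ}

lemma mem_NSet_of_mem_LWordsAfter (hq : 1 ≤ q) {i : ℕ+} {v : List ℕ+}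
    (hv : v ∈ LWordsAfter A q n i) : i ∈ NSet A n (q + 1) := by
  obtain ⟨hv, h, hh, hA⟩ := hv
  exact mem_NSet_succ hq (head_mem_NSet hq hv h hh) hA

lemma append_mem_LWords {m : ℕ} {i : ℕ+} {u v : List ℕ+} (hu : u ∈ LPrefLast A p m n i)
    (hv : v ∈ LWordsAfter A q n i) : u ++ v ∈ LWords A (p + q) n := by
  obtain ⟨⟨hul, w, hw, ⟨r, rfl⟩⟩, hui⟩ := hu
  obtain ⟨⟨hvl, hvadm, hvlast⟩, h, hh, hA⟩ := hv
  have hv₀ : v ≠ [] := by rintro rfl; simp at hh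
  refine ⟨by simp [hul, hvl], List.isChain_append.mpr ⟨(List.isChain_append.mp hw.2.1).1, hvadm,
    ?_⟩, ?_⟩
  · rintro x hx y hy
    rw [hui, Option.mem_some_iff] at hx
    rw [Option.mem_def, hh, Option.some_inj] at hy
    exact hx ▸ hy ▸ hA
  · rw [List.getLast?_append_of_ne_nil _ hv₀]
    exact hvlast

lemma exists_take_mem_LPrefLast (hp : 1 ≤ p) (hq : 1 ≤ q) {w : List ℕ+}
    (hw : w ∈ LWords A (p + q) n) :
    ∃ i, w.take p ∈ LPrefLast A p (p + q) n i ∧ w.drop p ∈ LWordsAfter A q n i := by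
  have hu₀ : w.take p ≠ [] := List.ne_nil_of_length_pos (by simp [hw.1]; omega)
  have hv₀ : w.drop p ≠ [] := List.ne_nil_of_length_pos (by simp [hw.1]; omega)
  have hlink := (List.isChain_append.mp ((List.take_append_drop p w).symm ▸ hw.2.1)).2.2
  refine ⟨(w.take p).getLast hu₀, ⟨⟨by simp [hw.1], w, hw, List.take_prefix p w⟩,
    List.getLast?_eq_some_getLast hu₀⟩, ?_, (w.drop p).head hv₀, List.head?_eq_some_head hv₀, ?_⟩
  · simpa using drop_mem_LWords hw p
  · exact hlink _ (List.getLast?_eq_some_getLast hu₀) _ (List.head?_eq_some_head hv₀)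

lemma LWords_add_eq_biUnion (hp : 1 ≤ p) (hq : 1 ≤ q) :
    LWords A (p + q) n = ⋃ i ∈ NSet A n (q + 1),
      (fun x => x.1 ++ x.2) '' (LPrefLast A p (p + q) n i ×ˢ LWordsAfter A q n i) := by
  ext w
  simp only [Set.mem_iUnion, Set.mem_image, Set.mem_prod, Prod.exists, exists_prop]
  constructor
  · intro hw
    obtain ⟨i, hu, hv⟩ := exists_take_mem_LPrefLast hp hq hw
    exact ⟨i, mem_NSet_of_mem_LWordsAfter hq hv, _, _, ⟨hu, hv⟩, List.take_append_drop p w⟩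
  · rintro ⟨i, -, u, v, ⟨hu, hv⟩, rfl⟩
    exact append_mem_LWords hu hv

lemma LPref_eq_biUnion (hp : 1 ≤ p) (hq : 1 ≤ q) :
    LPref A p (p + q) n = ⋃ i ∈ NSet A n (q + 1), LPrefLast A p (p + q) n i := by
  ext u
  simp only [Set.mem_iUnion, exists_prop]
  constructor
  · rintro ⟨hul, w, hw, huw⟩
    obtain ⟨i, hwu, hv⟩ := exists_take_mem_LPrefLast hp hq hw
    rw [List.prefix_iff_eq_take, hul] at huw
    rw [← huw] at hwu
    exact ⟨i, mem_NSet_of_mem_LWordsAfter hq hv, hwu⟩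
  · rintro ⟨i, -, hu, -⟩
    exact hu

lemma LWords_subset_biUnion (hnzc : ∀ i : ℕ+, ∃ j : ℕ+, A j i = true) (hq : 1 ≤ q) :
    LWords A q n ⊆ ⋃ i ∈ NSet A n (q + 1), LWordsAfter A q n i := by
  rintro (_ | ⟨h, t⟩) hv
  · exact absurd hv.1 (by simp; omega)
  · obtain ⟨i, hA⟩ := hnzc h
    have hv' : h :: t ∈ LWordsAfter A q n i := ⟨hv, h, rfl, hA⟩
    exact Set.mem_biUnion (mem_NSet_of_mem_LWordsAfter hq hv') hv'

end Splitting

section Counting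

variable {A : ℕ+ → ℕ+ → Bool} {n : ℕ+} {p q : ℕ}

lemma eq_of_mem_LPrefLast {m : ℕ} {i j : ℕ+} {u : List ℕ+} (hi : u ∈ LPrefLast A p m n i)
    (hj : u ∈ LPrefLast A p m n j) : i = j :=
  Option.some_inj.mp (hi.2.symm.trans hj.2)

lemma LPrefLast_finite (hA : ∀ i, (rhoInv A i).Finite) {m : ℕ} (i : ℕ+) :
    (LPrefLast A p m n i).Finite :=
  (LPref_finite hA p m).subset (Set.sep_subset _ _)

lemma LWordsAfter_finite (hA : ∀ i, (rhoInv A i).Finite) (i : ℕ+) :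
    (LWordsAfter A q n i).Finite :=
  (LWords_finite hA q).subset (Set.sep_subset _ _)

lemma ncard_LWords_add (hA : ∀ i, (rhoInv A i).Finite) (hp : 1 ≤ p) (hq : 1 ≤ q) :
    (LWords A (p + q) n).ncard = ∑ᶠ i ∈ NSet A n (q + 1),
      (LPrefLast A p (p + q) n i).ncard * (LWordsAfter A q n i).ncard := by
  have hsplit : ∀ {i j : ℕ+} {u v u' v' : List ℕ+}, u ∈ LPrefLast A p (p + q) n i →
      u' ∈ LPrefLast A p (p + q) n j → u ++ v = u' ++ v' → u = u' ∧ v = v' :=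
    fun hu hu' h => List.append_inj h (hu.1.1.trans hu'.1.1.symm)
  rw [LWords_add_eq_biUnion hp hq, (NSet_finite hA _).ncard_biUnion]
  · refine finsum_mem_congr rfl fun i _ => ?_
    rw [Set.InjOn.ncard_image, Set.ncard_prod]
    rintro ⟨u, v⟩ ⟨hu, -⟩ ⟨u', v'⟩ ⟨hu', -⟩ h
    exact Prod.ext_iff.mpr (hsplit hu hu' h)
  · exact fun i _ => ((LPrefLast_finite hA i).prod (LWordsAfter_finite hA i)).image _
  · rintro i - j - hij
    refine Set.disjoint_left.mpr ?_
    rintro _ ⟨⟨u, v⟩, ⟨hu, -⟩, rfl⟩ ⟨⟨u', v'⟩, ⟨hu', -⟩, h⟩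
    exact hij (eq_of_mem_LPrefLast ((hsplit hu' hu h).1 ▸ hu') hu).symm

lemma ncard_LPref (hA : ∀ i, (rhoInv A i).Finite) (hp : 1 ≤ p) (hq : 1 ≤ q) :
    (LPref A p (p + q) n).ncard = ∑ᶠ i ∈ NSet A n (q + 1), (LPrefLast A p (p + q) n i).ncard := by
  rw [LPref_eq_biUnion hp hq, (NSet_finite hA _).ncard_biUnion (fun i _ => LPrefLast_finite hA i)]
  rintro i - j - hij
  exact Set.disjoint_left.mpr fun u hi hj => hij (eq_of_mem_LPrefLast hi hj)

lemma ncard_LWords_le (hA : ∀ i, (rhoInv A i).Finite) (hnzc : ∀ i : ℕ+, ∃ j : ℕ+, A j i = true)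
    (hq : 1 ≤ q) :
    (LWords A q n).ncard ≤ ∑ᶠ i ∈ NSet A n (q + 1), (LWordsAfter A q n i).ncard :=
  (Set.ncard_le_ncard (LWords_subset_biUnion hnzc hq)
    ((NSet_finite hA _).biUnion fun i _ => LWordsAfter_finite hA i)).trans
    ((NSet_finite hA _).ncard_biUnion_le _)

end Counting

theorem stmt5_general (A : ℕ+ → ℕ+ → Bool) (M : ℕ)
    (hUCF : ∀ j : ℕ+, {i : ℕ+ | A i j = true}.encard ≤ M)
    (hnzc : ∀ i : ℕ+, ∃ j : ℕ+, A j i = true)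
    (m p : ℕ) (n : ℕ+) (hp : 1 ≤ p) (hpm : p ≤ m - 1)
    (hss : ∀ i j : ℕ+, i ∈ NSet A n (m - p + 1) → j ∈ NSet A n (m - p + 1) →
      {u ∈ LPref A p m n | u.getLast? = some i}.ncard
        = {u ∈ LPref A p m n | u.getLast? = some j}.ncard) :
    (LPref A p m n).ncard * (LWords A (m - p) n).ncard
      ≤ ISup A n (m - p + 1) * (LWords A m n).ncard := by
  have hA : ∀ i, (rhoInv A i).Finite := fun i => Set.finite_of_encard_le_coe (hUCF i)
  obtain ⟨q, rfl⟩ : ∃ q, m = p + q := ⟨m - p, by omega⟩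
  have hq : 1 ≤ q := by omega
  rw [Nat.add_sub_cancel_left] at hss ⊢
  have hconst : ∀ i ∈ NSet A n (q + 1), ∀ j ∈ NSet A n (q + 1),
      (LPrefLast A p (p + q) n i).ncard = (LPrefLast A p (p + q) n j).ncard :=
    fun i hi j hj => hss i j hi hj
  calc (LPref A p (p + q) n).ncard * (LWords A q n).ncard
      ≤ (∑ᶠ i ∈ NSet A n (q + 1), (LPrefLast A p (p + q) n i).ncard) *
          ∑ᶠ i ∈ NSet A n (q + 1), (LWordsAfter A q n i).ncard := by
        rw [ncard_LPref hA hp hq]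
        exact Nat.mul_le_mul_left _ (ncard_LWords_le hA hnzc hq)
    _ = (NSet A n (q + 1)).ncard * (LWords A (p + q) n).ncard := by
        rw [finsum_mem_mul_finsum_mem_of_eqOn (NSet_finite hA _) _ hconst, smul_eq_mul,
          ncard_LWords_add hA hp hq]
    _ ≤ ISup A n (q + 1) * (LWords A (p + q) n).ncard :=
        Nat.mul_le_mul_right _ (ncard_NSet_le_ISup hA _)

/-- let `A` be uniformly column finite with no zero columns, let
`1 ≤ p ≤ m − 1`, and assume the self-similar inverse image structure
`|L_p^i(m,n)| = |L_p^j(m,n)|` for all `i, j ∈ N(m−p+1,n)`, where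
`L_p^i(m,n) = {α ∈ L_p(m,n) : α_p = i}`.  Then
`|L_p(m,n)| · |L(m−p,n)| ≤ I(m−p+1,n) · |L(m,n)|`. -/
theorem stmt5 (A : ℕ+ → ℕ+ → Bool) (M : ℕ)
    (hUCF : ∀ j : ℕ+, {i : ℕ+ | A i j = true}.encard ≤ M)
    (hnzc : ∀ i : ℕ+, ∃ j : ℕ+, A j i = true)
    (m p : ℕ) (n : ℕ+) (hp : 1 ≤ p) (hpm : p ≤ m - 1) (hm : 1 ≤ m)
    (hss : ∀ i j : ℕ+, i ∈ NSet A n (m - p + 1) → j ∈ NSet A n (m - p + 1) →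
      {u ∈ LPref A p m n | u.getLast? = some i}.ncard
        = {u ∈ LPref A p m n | u.getLast? = some j}.ncard) :
    (LPref A p m n).ncard * (LWords A (m - p) n).ncard
      ≤ ISup A n (m - p + 1) * (LWords A m n).ncard :=
  stmt5_general A M hUCF hnzc m p n hp hpm hss
end

section
/- Let A be the renewal matrix. The partition of the positive integers into H^(1) = {1} and H^(2) = {2,3,4,…} is an A-orthogonal division in which exactly one part is infinite, and the trivial partition consisting of the single set of all positive integers is not an A-orthogonal division. Consequently the minimal number m_A of parts of an A-orthogonal division for the renewal matrix equals 2, and the minimal number P_A of infinite parts among minimal A-orthogonal divisions equals 1. -/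
/-- An `A`-orthogonal division: a partition of the positive integers into `m` parts
`H 0, …, H (m-1)` such that `|ρ_A^{-1}(k) ∩ H l| ≤ 1` for every `k` and every part `l`,
where `ρ_A^{-1}(k) = {j : A(j,k) = 1}`. -/
def IsOrthDiv (A : ℕ+ → ℕ+ → Bool) (m : ℕ) (H : Fin m → Set ℕ+) : Prop :=
  (∀ x : ℕ+, ∃! l : Fin m, x ∈ H l) ∧
  ∀ (k : ℕ+) (l : Fin m), ({j : ℕ+ | A j k = true} ∩ H l).encard ≤ 1

/-- The renewal matrix: `A(i,j) = 1` iff `i = 1` or `j = i − 1`. -/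
def renewal (i j : ℕ+) : Bool := decide (i = 1 ∨ (j : ℕ) + 1 = (i : ℕ))

/-- The division `H⁽¹⁾ = {1}`, `H⁽²⁾ = {2,3,4,…}`. -/
def renewalDiv : Fin 2 → Set ℕ+ := ![{1}, {x : ℕ+ | 2 ≤ x}]

/-! Column `1` of the renewal matrix has its ones in rows `1` and `2`, so these rows must lie in
different parts and at least two parts are needed; `{1}, {2,3,…}` shows two suffice. Since `ℕ+`
is infinite, a partition into finitely many parts always has an infinite part, and in
`{1}, {2,3,…}` only one part is infinite. -/

namespace IsOrthDiv

variable {A : ℕ+ → ℕ+ → Bool} {m : ℕ} {H : Fin m → Set ℕ+}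

theorem exists_infinite (hH : IsOrthDiv A m H) : ∃ l, (H l).Infinite := by
  by_contra! hfin
  have hcover : ⋃ l, H l = Set.univ :=
    Set.eq_univ_of_forall fun x => Set.mem_iUnion.2 (hH.1 x).exists
  exact Set.infinite_univ (hcover ▸ Set.finite_iUnion hfin)

theorem one_le_ncard_setOf_infinite (hH : IsOrthDiv A m H) :
    1 ≤ {l | (H l).Infinite}.ncard :=
  (Set.ncard_pos).2 hH.exists_infinite

theorem two_le_of_eq_true {i j k : ℕ+} (hij : i ≠ j) (hi : A i k = true) (hj : A j k = true)
    (hH : IsOrthDiv A m H) : 2 ≤ m := by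
  obtain ⟨l, hil, -⟩ := hH.1 i
  obtain ⟨l', hjl', -⟩ := hH.1 j
  by_contra! hm
  have hl : l' = l := Fin.ext (by omega)
  exact hij (Set.encard_le_one_iff.1 (hH.2 k l) i j ⟨hi, hil⟩ ⟨hj, hl ▸ hjl'⟩)

end IsOrthDiv

theorem renewal_eq_true_iff {i j : ℕ+} : renewal i j = true ↔ i = 1 ∨ (j : ℕ) + 1 = i := by
  simp [renewal]

theorem mem_renewalDiv_zero {x : ℕ+} : x ∈ renewalDiv 0 ↔ x = 1 := Iff.rfl

theorem mem_renewalDiv_one {x : ℕ+} : x ∈ renewalDiv 1 ↔ x ≠ 1 := by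
  show 2 ≤ x ↔ x ≠ 1
  rw [← PNat.coe_le_coe, Ne, ← PNat.coe_eq_one_iff, PNat.val_ofNat]
  have := x.pos
  omega

theorem isOrthDiv_renewalDiv : IsOrthDiv renewal 2 renewalDiv := by
  refine ⟨fun x => ?_, fun k l => Set.encard_le_one_iff.2 fun a b ha hb => ?_⟩
  · by_cases hx : x = 1
    · refine ⟨0, mem_renewalDiv_zero.2 hx, fun l hl => ?_⟩
      fin_cases l
      exacts [rfl, absurd hx (mem_renewalDiv_one.1 hl)]
    · refine ⟨1, mem_renewalDiv_one.2 hx, fun l hl => ?_⟩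
      fin_cases l
      exacts [absurd (mem_renewalDiv_zero.1 hl) hx, rfl]
  · fin_cases l
    · exact (mem_renewalDiv_zero.1 ha.2).trans (mem_renewalDiv_zero.1 hb.2).symm
    · have hak := (renewal_eq_true_iff.1 ha.1).resolve_left (mem_renewalDiv_one.1 ha.2)
      have hbk := (renewal_eq_true_iff.1 hb.1).resolve_left (mem_renewalDiv_one.1 hb.2)
      exact PNat.coe_injective (hak.symm.trans hbk)

theorem setOf_infinite_renewalDiv : {l | (renewalDiv l).Infinite} = {1} := by
  ext l
  fin_cases l
  · simp [renewalDiv]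
  · simpa using show (renewalDiv 1).Infinite from Set.Ici_infinite 2

theorem renewal_two_le_of_isOrthDiv {m : ℕ} {H : Fin m → Set ℕ+}
    (hH : IsOrthDiv renewal m H) : 2 ≤ m :=
  hH.two_le_of_eq_true (i := 1) (j := 2) (k := 1) (by decide) rfl rfl

/-- for the renewal matrix, the partition `{1}, {2,3,4,…}` is an
`A`-orthogonal division with exactly one infinite part, the trivial one-part partition
is not an `A`-orthogonal division, the minimal number `m_A` of parts of an
`A`-orthogonal division equals `2`, and the minimal number `P_A` of infinite parts
among minimal `A`-orthogonal divisions equals `1`. -/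
theorem stmt9 :
    IsOrthDiv renewal 2 renewalDiv ∧
    {l : Fin 2 | (renewalDiv l).Infinite}.ncard = 1 ∧
    ¬ IsOrthDiv renewal 1 (fun _ => Set.univ) ∧
    sInf {m : ℕ | ∃ H : Fin m → Set ℕ+, IsOrthDiv renewal m H} = 2 ∧
    sInf {p : ℕ | ∃ H : Fin 2 → Set ℕ+, IsOrthDiv renewal 2 H ∧
      {l : Fin 2 | (H l).Infinite}.ncard = p} = 1 := by
  have hncard : {l : Fin 2 | (renewalDiv l).Infinite}.ncard = 1 := by
    rw [setOf_infinite_renewalDiv, Set.ncard_singleton]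
  refine ⟨isOrthDiv_renewalDiv, hncard, fun h => by simpa using renewal_two_le_of_isOrthDiv h,
    ?_, ?_⟩
  · exact IsLeast.csInf_eq ⟨⟨_, isOrthDiv_renewalDiv⟩, fun m ⟨_, hH⟩ =>
      renewal_two_le_of_isOrthDiv hH⟩
  · exact IsLeast.csInf_eq ⟨⟨_, isOrthDiv_renewalDiv, hncard⟩, fun p ⟨_, hH, hp⟩ =>
      hp ▸ hH.one_le_ncard_setOf_infinite⟩
end

section
/- Let A be the 0-1 matrix over the positive integers defined by A(i,j) = 1 if and only if i ∈ {2j−1, 2j}. Then every row of A has exactly one nonzero entry and every column has exactly two nonzero entries (so A is uniformly locally finite), and for all positive integers m and n, N(m,n) = {1,…,2^(m−1)·n}. Consequently I(m,n) = 2^(m−1)·n, and for every n, lim_{m→∞} (1/m)·log I(m,n) = log 2; hence the quantity 𝓘 := limsup_{n→∞} limsup_{m→∞} (1/m)·log I(m,n) equals log 2 > 0, so this locally finite matrix fails condition (SI). -/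
/-- The matrix of Example: `A(i,j) = 1` iff `i ∈ {2j−1, 2j}`. -/
def doubling (i j : ℕ+) : Bool :=
  decide ((i : ℕ) = 2 * (j : ℕ) - 1 ∨ (i : ℕ) = 2 * (j : ℕ))

/-! Row `i` of the matrix has its only `1` in column `⌈i/2⌉`, so `ρ⁻¹({1,…,k}) = {1,…,2k}`.
Iterating, `N(m,n) = {1,…,2^(m-1) n}`, whence `log I(m,n) / m = log 2 + (log n - log 2) / m`,
which tends to `log 2` for every `n`. -/

open Filter Topology

lemma doubling_eq_true_iff (i j : ℕ+) : doubling i j = true ↔ ((i : ℕ) + 1) / 2 = j := by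
  have := i.pos
  simp only [doubling, decide_eq_true_eq]
  omega

-- Naming the witness avoids terms `⟨n, hn⟩`, whose type `{n // 0 < n}` is not reducibly `ℕ+`
-- and so blocks `rw` in sets of positive integers.
lemma exists_pnat_coe_eq {n : ℕ} (hn : 0 < n) : ∃ k : ℕ+, (k : ℕ) = n := ⟨⟨n, hn⟩, rfl⟩

lemma encard_setOf_doubling_row (i : ℕ+) : {j : ℕ+ | doubling i j = true}.encard = 1 := by
  obtain ⟨k, hk⟩ := exists_pnat_coe_eq (n := ((i : ℕ) + 1) / 2) (by have := i.pos; omega)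
  refine Set.encard_eq_one.2 ⟨k, Set.ext fun j => ?_⟩
  rw [Set.mem_ofPred_eq, Set.mem_singleton_iff, doubling_eq_true_iff, ← PNat.coe_inj, hk, eq_comm]

lemma encard_setOf_doubling_col (j : ℕ+) : {i : ℕ+ | doubling i j = true}.encard = 2 := by
  obtain ⟨k, hk⟩ := exists_pnat_coe_eq (n := 2 * (j : ℕ) - 1) (by have := j.pos; omega)
  obtain ⟨l, hl⟩ := exists_pnat_coe_eq (n := 2 * (j : ℕ)) (by positivity)
  refine Set.encard_eq_two.2 ⟨k, l, fun h => ?_, Set.ext fun i => ?_⟩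
  · rw [← PNat.coe_inj, hk, hl] at h
    have := j.pos
    omega
  · rw [Set.mem_ofPred_eq, Set.mem_insert_iff, Set.mem_singleton_iff, doubling_eq_true_iff,
      ← PNat.coe_inj, ← PNat.coe_inj, hk, hl]
    have := i.pos
    omega

lemma rhoInvSet_doubling_Iic (k : ℕ) :
    rhoInvSet doubling {i : ℕ+ | (i : ℕ) ≤ k} = {j : ℕ+ | (j : ℕ) ≤ 2 * k} := by
  ext j
  simp only [rhoInvSet, rhoInv, Set.mem_iUnion, Set.mem_ofPred_eq, doubling_eq_true_iff,
    exists_prop]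
  constructor
  · rintro ⟨i, hi, hji⟩
    omega
  · intro hj
    obtain ⟨i, hi⟩ := exists_pnat_coe_eq (n := ((j : ℕ) + 1) / 2) (by have := j.pos; omega)
    exact ⟨i, by omega, hi.symm⟩

lemma NSet_doubling (n : ℕ+) (m : ℕ) :
    NSet doubling n (m + 1) = {i : ℕ+ | (i : ℕ) ≤ 2 ^ m * (n : ℕ)} := by
  induction m with
  | zero => ext i; simp [NSet, ← PNat.coe_le_coe]
  | succ m ih => rw [NSet, ih, rhoInvSet_doubling_Iic, pow_succ', mul_assoc]

lemma sSup_coe_setOf_le {K : ℕ} (hK : 0 < K) :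
    sSup ((fun i : ℕ+ => (i : ℕ)) '' {i : ℕ+ | (i : ℕ) ≤ K}) = K := by
  obtain ⟨k, hk⟩ := exists_pnat_coe_eq hK
  have hmem : K ∈ (fun i : ℕ+ => (i : ℕ)) '' {i : ℕ+ | (i : ℕ) ≤ K} := ⟨k, hk.le, hk⟩
  have hbdd : ∀ x ∈ (fun i : ℕ+ => (i : ℕ)) '' {i : ℕ+ | (i : ℕ) ≤ K}, x ≤ K := by
    rintro x ⟨i, hi, rfl⟩
    exact hi
  exact le_antisymm (csSup_le ⟨K, hmem⟩ hbdd) (le_csSup ⟨K, hbdd⟩ hmem)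

lemma ISup_doubling (n : ℕ+) (m : ℕ) : ISup doubling n (m + 1) = 2 ^ m * (n : ℕ) := by
  rw [ISup, NSet_doubling, sSup_coe_setOf_le (by positivity)]

lemma tendsto_log_pow_pred_mul_div {a c : ℝ} (ha : 0 < a) (hc : 0 < c) :
    Tendsto (fun m : ℕ => Real.log (a ^ (m - 1) * c) / m) atTop (𝓝 (Real.log a)) := by
  have hlog : ∀ᶠ m : ℕ in atTop,
      Real.log a + (Real.log c - Real.log a) / m = Real.log (a ^ (m - 1) * c) / m := by
    filter_upwards [eventually_ge_atTop 1] with m hm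
    have hm0 : (m : ℝ) ≠ 0 := by positivity
    rw [Real.log_mul (by positivity) hc.ne', Real.log_pow, Nat.cast_sub hm, Nat.cast_one]
    field_simp
    ring
  simpa using (tendsto_const_nhds.add (tendsto_const_div_atTop_nhds_zero_nat _)).congr' hlog

lemma tendsto_log_ISup_doubling_div (n : ℕ+) :
    Tendsto (fun m : ℕ => Real.log (ISup doubling n m) / m) atTop (𝓝 (Real.log 2)) := by
  refine (tendsto_log_pow_pred_mul_div two_pos (Nat.cast_pos.2 n.pos)).congr' ?_
  filter_upwards [eventually_ge_atTop 1] with m hm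
  obtain ⟨k, rfl⟩ := Nat.exists_eq_add_of_le' hm
  simp [ISup_doubling]

/-- for the matrix `A(i,j) = 1 ⟺ i ∈ {2j−1,2j}`, every row has exactly
one nonzero entry and every column exactly two (so `A` is uniformly locally finite),
`N(m,n) = {1,…,2^(m−1)·n}`, hence `I(m,n) = 2^(m−1)·n`,
`lim_{m→∞} (1/m)·log I(m,n) = log 2` for every `n`, and the quantity
`𝓘 = limsup_{n→∞} limsup_{m→∞} (1/m)·log I(m,n)` equals `log 2 > 0`;
so this locally finite matrix fails condition (SI). -/
theorem stmt11 :
    (∀ i : ℕ+, {j : ℕ+ | doubling i j = true}.encard = 1) ∧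
    (∀ j : ℕ+, {i : ℕ+ | doubling i j = true}.encard = 2) ∧
    (∀ m : ℕ, 1 ≤ m → ∀ n : ℕ+,
      NSet doubling n m = {i : ℕ+ | (i : ℕ) ≤ 2 ^ (m - 1) * (n : ℕ)}) ∧
    (∀ m : ℕ, 1 ≤ m → ∀ n : ℕ+, ISup doubling n m = 2 ^ (m - 1) * (n : ℕ)) ∧
    (∀ n : ℕ+,
      Filter.Tendsto (fun m : ℕ => Real.log (ISup doubling n m) / (m : ℝ))
        Filter.atTop (nhds (Real.log 2))) ∧
    Filter.limsup (fun n : ℕ+ =>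
        Filter.limsup (fun m : ℕ => Real.log (ISup doubling n m) / (m : ℝ))
          Filter.atTop) Filter.atTop = Real.log 2 ∧
    0 < Real.log 2 := by
  refine ⟨encard_setOf_doubling_row, encard_setOf_doubling_col, fun m hm n => ?_,
    fun m hm n => ?_, tendsto_log_ISup_doubling_div, ?_, Real.log_pos one_lt_two⟩
  · obtain ⟨k, rfl⟩ := Nat.exists_eq_add_of_le' hm
    exact NSet_doubling n k
  · obtain ⟨k, rfl⟩ := Nat.exists_eq_add_of_le' hm
    exact ISup_doubling n k
  · simp only [fun n => (tendsto_log_ISup_doubling_div n).limsup_eq, limsup_const]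
end

section
/- Let A be a 0-1 matrix over the positive integers that is uniformly column finite and topologically mixing. Then for every positive integer n and every positive integer j ≤ n, liminf_{m→∞} (1/m)·log |L(m,n)| ≥ limsup_{m→∞} (1/m)·log ℓ_m(j). -/
/-- Loops: admissible words of length `m+1` whose first and last letter both equal `j`. -/
def Loops (A : ℕ+ → ℕ+ → Bool) (m : ℕ) (j : ℕ+) : Set (List ℕ+) :=
  {w : List ℕ+ | w.length = m + 1 ∧ Adm A w ∧ w.head? = some j ∧ w.getLast? = some j}

/-!
Gluing a loop at `j` onto a word that ends in `j` (dropping the loop's first letter) is injective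
and gives a word that again ends in `j`. By mixing there is such a word of every large length `k`,
so appending `q` loops of length `m₀` yields `ℓ_{m₀}(j)^q ≤ |L(k + q m₀, n)|`, whence
`log ℓ_{m₀}(j) / m₀` is below the liminf for every `m₀`. Uniform column finiteness gives
`|L(m + 1, n)| ≤ n M^m`; this keeps `log |L(m, n)| / m` bounded above, without which the liminf
in `ℝ` would be a junk value.
-/

open Filter Set

section Chains

variable {α : Type*} (R : α → α → Prop)

def headedChains (S : Set α) (m : ℕ) : Set (List α) :=
  {w | w.length = m + 1 ∧ w.IsChain R ∧ ∀ x ∈ w.head?, x ∈ S}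

theorem encard_headedChains_le {M : ℕ} (hR : ∀ a, {b | R a b}.encard ≤ M) (m : ℕ) :
    ∀ {S : Set α}, S.Finite → (headedChains R S m).encard ≤ S.encard * M ^ m := by
  induction m with
  | zero =>
    intro S _
    have hsub : headedChains R S 0 ⊆ (fun x => [x]) '' S := by
      rintro (_ | ⟨x, _ | _⟩) ⟨hlen, -, hhead⟩ <;> simp at hlen
      exact ⟨x, hhead x rfl, rfl⟩
    simpa using (encard_le_encard hsub).trans (encard_image_le _ _)
  | succ m ih =>
    intro S hS
    obtain ⟨S, rfl⟩ := hS.exists_finset_coe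
    have hsub : headedChains R S (m + 1) ⊆
        ⋃ x ∈ S, List.cons x '' headedChains R {b | R x b} m := by
      rintro (_ | ⟨x, t⟩) ⟨hlen, hchain, hhead⟩
      · simp at hlen
      rw [List.isChain_cons] at hchain
      exact mem_biUnion (hhead x rfl) ⟨t, ⟨by simpa using hlen, hchain.2, hchain.1⟩, rfl⟩
    have hfiber (x : α) : (List.cons x '' headedChains R {b | R x b} m).encard ≤ M * M ^ m :=
      calc _ ≤ (headedChains R {b | R x b} m).encard := encard_image_le _ _
        _ ≤ {b | R x b}.encard * M ^ m := ih (finite_of_encard_le_coe (hR x))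
        _ ≤ M * M ^ m := by gcongr; exact hR x
    calc _ ≤ _ := encard_le_encard hsub
      _ ≤ ∑ x ∈ S, (List.cons x '' headedChains R {b | R x b} m).encard :=
        S.set_encard_biUnion_le _
      _ ≤ S.card • (M * M ^ m : ℕ∞) := Finset.sum_le_card_nsmul _ _ _ fun x _ => hfiber x
      _ = _ := by rw [encard_coe_eq_coe_finsetCard, nsmul_eq_mul, pow_succ']

end Chains

theorem Real.log_natCast_le_log_natCast {a b : ℕ} (h : a ≤ b) :
    Real.log a ≤ Real.log b := by
  rcases a.eq_zero_or_pos with rfl | ha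
  · simpa using Real.log_natCast_nonneg b
  · exact Real.log_le_log (by exact_mod_cast ha) (by exact_mod_cast h)

section UpperBound

variable {A : ℕ+ → ℕ+ → Bool} {M : ℕ}

-- Read backwards, a word of `LWords` starts in `Iic n` and each step stays in a column set.
theorem encard_lWords_succ_le (hUCF : ∀ j : ℕ+, {i : ℕ+ | A i j = true}.encard ≤ M)
    (m : ℕ) (n : ℕ+) : (LWords A (m + 1) n).encard ≤ (Iic n).encard * M ^ m := by
  have hsub : LWords A (m + 1) n ⊆ List.reverse '' headedChains (fun a b => A b a) (Iic n) m := by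
    rintro w ⟨hlen, hadm, hlast⟩
    refine ⟨w.reverse, ⟨by simpa using hlen, List.isChain_reverse.mpr hadm, ?_⟩, by simp⟩
    simpa [List.head?_reverse] using hlast
  calc _ ≤ _ := encard_le_encard hsub
    _ ≤ _ := encard_image_le _ _
    _ ≤ _ := encard_headedChains_le _ hUCF m (finite_Iic n)

theorem lWords_finite (hUCF : ∀ j : ℕ+, {i : ℕ+ | A i j = true}.encard ≤ M) (m : ℕ) (n : ℕ+) :
    (LWords A m n).Finite := by
  cases m with
  | zero =>
    refine (finite_singleton []).subset ?_
    rintro w ⟨hlen, -, -⟩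
    simpa using hlen
  | succ m =>
    refine finite_of_encard_le_coe (k := (Iic n).ncard * M ^ m) ?_
    simpa [(finite_Iic n).cast_ncard_eq] using encard_lWords_succ_le hUCF m n

theorem ncard_lWords_succ_le_pow (hUCF : ∀ j : ℕ+, {i : ℕ+ | A i j = true}.encard ≤ M)
    (m : ℕ) (n : ℕ+) : (LWords A (m + 1) n).ncard ≤ ((Iic n).ncard + M) ^ (m + 1) := by
  have h := encard_lWords_succ_le hUCF m n
  rw [← (lWords_finite hUCF _ n).cast_ncard_eq, ← (finite_Iic n).cast_ncard_eq] at h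
  calc _ ≤ (Iic n).ncard * M ^ m := by exact_mod_cast h
    _ ≤ ((Iic n).ncard + M) * ((Iic n).ncard + M) ^ m := by gcongr <;> omega
    _ = _ := (pow_succ' _ _).symm

theorem isBoundedUnder_log_ncard_lWords_div
    (hUCF : ∀ j : ℕ+, {i : ℕ+ | A i j = true}.encard ≤ M) (n : ℕ+) :
    IsBoundedUnder (· ≤ ·) atTop fun m : ℕ => Real.log (LWords A m n).ncard / m := by
  refine isBoundedUnder_of_eventually_le (a := Real.log ((Iic n).ncard + M : ℕ)) ?_
  filter_upwards [eventually_ge_atTop 1] with m hm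
  obtain ⟨k, rfl⟩ := Nat.exists_eq_add_of_le' hm
  rw [div_le_iff₀ (by positivity), mul_comm, ← Real.log_pow, ← Nat.cast_pow]
  exact Real.log_natCast_le_log_natCast (ncard_lWords_succ_le_pow hUCF k n)

end UpperBound

def EndWords (A : ℕ+ → ℕ+ → Bool) (k : ℕ) (j : ℕ+) : Set (List ℕ+) :=
  {w | w.length = k ∧ Adm A w ∧ w.getLast? = some j}

section LowerBound

variable {A : ℕ+ → ℕ+ → Bool}

theorem endWords_subset_lWords {k : ℕ} {j n : ℕ+} (hj : j ≤ n) :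
    EndWords A k j ⊆ LWords A k n := by
  rintro w ⟨hlen, hadm, hlast⟩
  exact ⟨hlen, hadm, by simpa [hlast] using hj⟩

theorem append_tail_mem_endWords {k m : ℕ} {j : ℕ+} {u w : List ℕ+}
    (hu : u ∈ EndWords A k j) (hw : w ∈ Loops A m j) :
    u ++ w.tail ∈ EndWords A (k + m) j := by
  obtain ⟨hulen, huadm, hulast⟩ := hu
  obtain ⟨hwlen, hwadm, hwhead, hwlast⟩ := hw
  rw [← List.cons_head?_tail hwhead] at hwadm hwlast
  refine ⟨by simp [hulen, hwlen], ?_, ?_⟩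
  · refine huadm.append hwadm.tail fun x hx y hy => ?_
    rw [hulast, Option.mem_some_iff] at hx
    exact hx ▸ (List.isChain_cons.mp hwadm).1 y hy
  · rw [List.getLast?_cons] at hwlast
    rw [List.getLast?_append, hulast]
    cases h : w.tail.getLast? <;> simp_all

theorem injOn_append_tail (k m : ℕ) (j : ℕ+) :
    InjOn (fun p : List ℕ+ × List ℕ+ => p.1 ++ p.2.tail) (EndWords A k j ×ˢ Loops A m j) := by
  rintro ⟨u₁, w₁⟩ ⟨⟨hu₁, -⟩, ⟨-, -, hw₁ : w₁.head? = some j, -⟩⟩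
    ⟨u₂, w₂⟩ ⟨⟨hu₂, -⟩, ⟨-, -, hw₂ : w₂.head? = some j, -⟩⟩ h
  obtain ⟨rfl, htail⟩ := List.append_inj h (hu₁.trans hu₂.symm)
  refine Prod.ext rfl ?_
  rw [← List.cons_head?_tail hw₁, ← List.cons_head?_tail hw₂, htail]

theorem encard_endWords_mul_encard_loops_le (k m : ℕ) (j : ℕ+) :
    (EndWords A k j).encard * (Loops A m j).encard ≤ (EndWords A (k + m) j).encard := by
  rw [← encard_prod, ← (injOn_append_tail k m j).encard_image]
  refine encard_le_encard ?_
  rintro - ⟨⟨u, w⟩, ⟨hu, hw⟩, rfl⟩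
  exact append_tail_mem_endWords hu hw

theorem encard_loops_pow_le {k : ℕ} {j : ℕ+} (h : (EndWords A k j).Nonempty) (m q : ℕ) :
    (Loops A m j).encard ^ q ≤ (EndWords A (k + q * m) j).encard := by
  induction q with
  | zero => simpa using h
  | succ q ih =>
    calc _ = (Loops A m j).encard ^ q * (Loops A m j).encard := pow_succ _ _
      _ ≤ (EndWords A (k + q * m) j).encard * (Loops A m j).encard := by gcongr
      _ ≤ _ := encard_endWords_mul_encard_loops_le _ _ _
      _ = _ := by rw [add_assoc, ← Nat.succ_mul]

theorem loops_subset_endWords (m : ℕ) (j : ℕ+) : Loops A m j ⊆ EndWords A (m + 1) j :=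
  fun _ ⟨hlen, hadm, _, hlast⟩ => ⟨hlen, hadm, hlast⟩

theorem ncard_loops_pow_le_ncard_lWords {k m q : ℕ} {j n : ℕ+} (hj : j ≤ n)
    (hk : (EndWords A k j).Nonempty) (hfin : (LWords A (k + q * m) n).Finite) :
    (Loops A m j).ncard ^ q ≤ (LWords A (k + q * m) n).ncard := by
  have h : ((Loops A m j).ncard : ℕ∞) ^ q ≤ (LWords A (k + q * m) n).encard :=
    calc _ ≤ (Loops A m j).encard ^ q := by gcongr; exact ENat.natCast_toNat_le_self _
      _ ≤ _ := encard_loops_pow_le hk m q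
      _ ≤ _ := encard_le_encard (endWords_subset_lWords hj)
  rw [← hfin.cast_ncard_eq] at h
  exact_mod_cast h

end LowerBound

theorem le_liminf_div_of_eventually_mul_sub_le {u : ℕ → ℝ} {a K : ℝ}
    (hu : IsBoundedUnder (· ≤ ·) atTop fun m : ℕ => u m / m)
    (h : ∀ᶠ m : ℕ in atTop, a * (m - K) ≤ u m) :
    a ≤ liminf (fun m : ℕ => u m / m) atTop := by
  have hlim : Tendsto (fun m : ℕ => a * (1 - K / m)) atTop (nhds a) := by
    simpa using ((tendsto_const_div_atTop_nhds_zero_nat K).const_sub 1).const_mul a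
  rw [← hlim.liminf_eq]
  refine liminf_le_liminf ?_ hlim.isBoundedUnder_ge hu.isCoboundedUnder_flip
  filter_upwards [h, eventually_gt_atTop 0] with m hm hpos
  have hpos : (0 : ℝ) < m := by exact_mod_cast hpos
  rw [le_div_iff₀ hpos]
  calc a * (1 - K / m) * m = a * (m - K) := by field_simp
    _ ≤ u m := hm

theorem div_mul_sub_le_of_forall_mul_le_add_mul {u : ℕ → ℝ} {c : ℝ} {m₀ N : ℕ} (hc : 0 ≤ c)
    (hu : ∀ m, 0 ≤ u m) (h : ∀ k ≥ N, ∀ q : ℕ, q * c ≤ u (k + q * m₀)) :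
    ∀ m ≥ N, c / m₀ * (m - (N + m₀)) ≤ u m := by
  intro m hm
  rcases m₀.eq_zero_or_pos with rfl | hm₀
  · simpa using hu m
  set q := (m - N) / m₀
  have hqm : q * m₀ ≤ m - N := Nat.div_mul_le_self _ _
  have hlt : m - N < q * m₀ + m₀ := Nat.lt_div_mul_add hm₀
  have hq := h (m - q * m₀) (by omega) q
  rw [Nat.sub_add_cancel (by omega)] at hq
  have hlt' : (m : ℝ) - (N + m₀) ≤ q * m₀ := by
    have : (m : ℝ) < q * m₀ + m₀ + N := by exact_mod_cast (by omega : m < q * m₀ + m₀ + N)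
    linarith
  calc c / m₀ * (m - (N + m₀)) ≤ c / m₀ * (q * m₀) := by gcongr
    _ = q * c := by field_simp
    _ ≤ u m := hq

theorem log_ncard_loops_div_le_liminf {A : ℕ+ → ℕ+ → Bool} {M : ℕ}
    (hUCF : ∀ j : ℕ+, {i : ℕ+ | A i j = true}.encard ≤ M) {j n : ℕ+} (hj : j ≤ n)
    (hloops : ∀ᶠ m in atTop, (Loops A m j).Nonempty) (m₀ : ℕ) :
    Real.log (Loops A m₀ j).ncard / m₀ ≤
      liminf (fun m : ℕ => Real.log (LWords A m n).ncard / m) atTop := by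
  obtain ⟨N, hN⟩ := eventually_atTop.mp hloops
  refine le_liminf_div_of_eventually_mul_sub_le (K := (N + 1 : ℕ) + m₀)
    (isBoundedUnder_log_ncard_lWords_div hUCF n) ?_
  filter_upwards [eventually_ge_atTop (N + 1)] with m hm
  refine div_mul_sub_le_of_forall_mul_le_add_mul (u := fun m => Real.log (LWords A m n).ncard)
    (Real.log_natCast_nonneg _) (fun _ => Real.log_natCast_nonneg _) (fun k hk q => ?_) m hm
  obtain ⟨k, rfl⟩ := Nat.exists_eq_add_of_le' (le_of_add_le_right hk)
  have hk : (EndWords A (k + 1) j).Nonempty :=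
    (hN k (by omega)).mono (loops_subset_endWords k j)
  rw [← Real.log_pow, ← Nat.cast_pow]
  exact Real.log_natCast_le_log_natCast
    (ncard_loops_pow_le_ncard_lWords hj hk (lWords_finite hUCF _ n))

/-- let `A` be uniformly column finite and topologically mixing.
Then for every `n` and every `j ≤ n`,
`liminf_{m→∞} (1/m)·log |L(m,n)| ≥ limsup_{m→∞} (1/m)·log ℓ_m(j)`,
where `ℓ_m(j)` is the number of admissible words of length `m+1` whose first and last
letters both equal `j`. -/
theorem stmt17 (A : ℕ+ → ℕ+ → Bool) (M : ℕ)
    (hUCF : ∀ j : ℕ+, {i : ℕ+ | A i j = true}.encard ≤ M)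
    (hmix : ∀ i j : ℕ+, ∃ N : ℕ, ∀ m : ℕ, N ≤ m →
      ∃ w : List ℕ+, w.length = m + 1 ∧ Adm A w ∧
        w.head? = some i ∧ w.getLast? = some j)
    (n j : ℕ+) (hj : j ≤ n) :
    Filter.limsup (fun m : ℕ => Real.log ((Loops A m j).ncard) / (m : ℝ)) Filter.atTop
      ≤ Filter.liminf (fun m : ℕ => Real.log ((LWords A m n).ncard) / (m : ℝ))
          Filter.atTop := by
  have hloops : ∀ᶠ m in atTop, (Loops A m j).Nonempty := eventually_atTop.mpr (hmix j j)
  exact limsup_le_of_le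
    (isCoboundedUnder_le_of_le atTop fun m => div_nonneg (Real.log_natCast_nonneg _) m.cast_nonneg)
    (Eventually.of_forall (log_ncard_loops_div_le_liminf hUCF hj hloops))
end

section
/- Let A be a 0-1 matrix over the positive integers that is uniformly column finite and topologically mixing, and suppose there exists a positive integer J such that {i : A(J,i) = 0} is finite (an A-infinite emitter); let N_J be the least j₀ such that A(J,j) = 1 for all j ≥ j₀. Then for every n ≥ N_J, limsup_{m→∞} (1/m)·log |L(m,n)| ≤ max_{1≤j≤n} ( limsup_{m→∞} (1/m)·log ℓ_m(j) ) + limsup_{m→∞} (1/m)·log I(m,n), where the limits superior on the right-hand side are taken in the extended real numbers. -/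
/-!
Since `J` emits to every letter `i ≥ NJ` and mixing takes care of the finitely many letters
below `NJ`, there is a single length `C + 1` such that every `j ≤ n` is joined to every letter
by an admissible bridge of that length. Prefixing a word of `L(m,n)` ending at `j` by a bridge
from `j` to its first letter gives a loop at `j` of length `m + C + 1`, and dropping the bridge
recovers the word. So `|L(m,n)| ≤ ∑_{j ≤ n} ℓ_{m+C}(j)`, and the growth rate of `L(·,n)` is at
most the largest loop growth rate; the `I(m,n)` term is nonnegative.
-/

open Filter Asymptotics

namespace Adm

variable {A : ℕ+ → ℕ+ → Bool}

lemma append_cons {p t : List ℕ+} {a : ℕ+} (hp : Adm A (p ++ [a])) (ht : Adm A (a :: t)) :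
    Adm A (p ++ a :: t) := by
  have h := List.IsChain.append_overlap (l₂ := [a]) hp ht (List.cons_ne_nil _ _)
  rw [List.append_assoc, List.singleton_append] at h
  exact h

end Adm

section Words

variable {A : ℕ+ → ℕ+ → Bool}

lemma LWords_finite_s18 (hcol : ∀ j : ℕ+, {i : ℕ+ | A i j = true}.Finite) (m : ℕ) (n : ℕ+) :
    (LWords A m n).Finite := by
  induction m with
  | zero =>
    refine (Set.finite_singleton []).subset fun w hw => ?_
    simpa [List.length_eq_zero_iff] using hw.1
  | succ m ih =>
    have hfiber : ∀ t : List ℕ+, {a | a :: t ∈ LWords A (m + 1) n}.Finite := by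
      rintro (_ | ⟨b, t⟩)
      · exact (Set.finite_Iic n).subset fun a ha => ha.2.2 a (by simp)
      · exact (hcol b).subset fun a ha => (List.isChain_cons_cons.mp ha.2.1).1
    refine (ih.biUnion fun t _ => (hfiber t).image (· :: t)).subset ?_
    rintro (_ | ⟨a, t⟩) hw
    · simp [LWords] at hw
    · obtain ⟨hlen, hadm, hlast⟩ := hw
      refine Set.mem_biUnion (x := t) ⟨by simpa using hlen, hadm.tail, fun x hx => ?_⟩ ⟨a, ?_, rfl⟩
      · cases t with
        | nil => simp at hx
        | cons b t => exact hlast x (by simpa using hx)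
      · exact ⟨hlen, hadm, hlast⟩

lemma Loops_finite (hcol : ∀ j : ℕ+, {i : ℕ+ | A i j = true}.Finite) (m : ℕ) (j : ℕ+) :
    (Loops A m j).Finite :=
  (LWords_finite_s18 hcol (m + 1) j).subset fun _ ⟨hlen, hadm, _, hlast⟩ =>
    ⟨hlen, hadm, by simp [hlast]⟩

lemma exists_uniform_mixing_time
    (hmix : ∀ i j : ℕ+, ∃ N : ℕ, ∀ m : ℕ, N ≤ m →
      ∃ w : List ℕ+, w.length = m + 1 ∧ Adm A w ∧ w.head? = some i ∧ w.getLast? = some j)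
    (S T : Finset ℕ+) :
    ∃ N : ℕ, ∀ m : ℕ, N ≤ m → ∀ i ∈ S, ∀ j ∈ T,
      ∃ w : List ℕ+, w.length = m + 1 ∧ Adm A w ∧ w.head? = some i ∧ w.getLast? = some j := by
  choose Nf hNf using hmix
  exact ⟨S.sup fun i => T.sup (Nf i), fun m hm i hi j hj =>
    hNf i j m ((Finset.le_sup hj).trans ((Finset.le_sup (f := fun i => T.sup (Nf i)) hi).trans hm))⟩

/-- To reach `i ≥ NJ`, go to the infinite emitter `J` and jump to `i`; the finitely many
`i < NJ` are reached by mixing. -/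
lemma exists_bridge
    (hmix : ∀ i j : ℕ+, ∃ N : ℕ, ∀ m : ℕ, N ≤ m →
      ∃ w : List ℕ+, w.length = m + 1 ∧ Adm A w ∧ w.head? = some i ∧ w.getLast? = some j)
    {J NJ : ℕ+} (hJ : ∀ i : ℕ+, NJ ≤ i → A J i = true) (n : ℕ+) :
    ∃ C : ℕ, ∀ j ≤ n, ∀ i : ℕ+,
      ∃ p : List ℕ+, p.length = C + 1 ∧ p.head? = some j ∧ Adm A (p ++ [i]) := by
  obtain ⟨N, hN⟩ := exists_uniform_mixing_time hmix (Finset.Iic n) (insert J (Finset.Iio NJ))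
  refine ⟨N, fun j hj i => ?_⟩
  have hjS : j ∈ Finset.Iic n := Finset.mem_Iic.mpr hj
  rcases le_or_gt NJ i with hi | hi
  · obtain ⟨w, hlen, hadm, hhead, hlast⟩ := hN N le_rfl j hjS J (Finset.mem_insert_self _ _)
    refine ⟨w, hlen, hhead, List.IsChain.append hadm (List.isChain_singleton i) ?_⟩
    simpa [hlast] using hJ i hi
  · obtain ⟨w, hlen, hadm, hhead, hlast⟩ := hN (N + 1) (by omega) j hjS i (by simp [hi])
    refine ⟨w.dropLast, by simp [hlen], ?_, by rwa [List.dropLast_append_getLast? i hlast]⟩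
    obtain ⟨a, b, t, rfl⟩ : ∃ a b t, w = a :: b :: t := by
      rcases w with _ | ⟨a, _ | ⟨b, t⟩⟩ <;> simp_all
    simpa using hhead

lemma ncard_LWords_le_sum_ncard_Loops (hcol : ∀ j : ℕ+, {i : ℕ+ | A i j = true}.Finite)
    {n : ℕ+} {C : ℕ} (hbridge : ∀ j ≤ n, ∀ i : ℕ+,
      ∃ p : List ℕ+, p.length = C + 1 ∧ p.head? = some j ∧ Adm A (p ++ [i]))
    {m : ℕ} (hm : 0 < m) :
    (LWords A m n).ncard ≤ ∑ j ∈ Finset.Iic n, (Loops A (m + C) j).ncard := by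
  have hext : ∀ w ∈ LWords A m n,
      ∃ v ∈ ⋃ j ∈ Finset.Iic n, Loops A (m + C) j, v.drop (C + 1) = w := by
    rintro w ⟨hlen, hadm, hlast⟩
    obtain ⟨a, t, rfl⟩ := List.exists_cons_of_length_pos (hlen ▸ hm)
    obtain ⟨j, hj⟩ : ∃ j, (a :: t).getLast? = some j :=
      ⟨_, List.getLast?_eq_some_getLast (List.cons_ne_nil _ _)⟩
    obtain ⟨p, hplen, hphead, hpadm⟩ := hbridge j (hlast j hj) a
    have hp : p ≠ [] := by rintro rfl; simp at hplen
    refine ⟨p ++ a :: t, Set.mem_biUnion (x := j) ?_ ?_, List.drop_left' hplen⟩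
    · exact Finset.mem_coe.mpr (Finset.mem_Iic.mpr (hlast j hj))
    · refine ⟨by simp [hplen, ← hlen]; omega, hpadm.append_cons hadm, ?_, ?_⟩
      · rwa [List.head?_append_of_ne_nil _ hp]
      · rwa [List.getLast?_append_of_ne_nil _ (List.cons_ne_nil _ _)]
  choose! Φ hΦ hΦdrop using hext
  calc (LWords A m n).ncard ≤ (⋃ j ∈ Finset.Iic n, Loops A (m + C) j).ncard :=
        Set.ncard_le_ncard_of_injOn Φ hΦ
          (fun w hw w' hw' h => by rw [← hΦdrop w hw, ← hΦdrop w' hw', h])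
          ((Finset.Iic n).finite_toSet.biUnion fun j _ => Loops_finite hcol _ j)
    _ ≤ _ := Finset.set_ncard_biUnion_le _ _

end Words

/-- The exponential growth rate `limsup (1/m) log (u m)`; the junk value `log 0 = 0` makes it
nonnegative. -/
noncomputable def growthRate (u : ℕ → ℕ) : EReal :=
  limsup (fun m : ℕ => ((Real.log (u m) / (m : ℝ) : ℝ) : EReal)) atTop

lemma growthRate_nonneg (u : ℕ → ℕ) : 0 ≤ growthRate u := by
  refine (limsup_const (f := (atTop : Filter ℕ)) (0 : EReal)).symm.le.trans
    (limsup_le_limsup (Eventually.of_forall fun m => ?_))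
  exact EReal.coe_nonneg.mpr (div_nonneg (Real.log_natCast_nonneg _) m.cast_nonneg)

lemma isBigO_exp_of_growthRate_lt {u : ℕ → ℕ} {a : ℝ} (h : growthRate u < a) :
    (fun m => (u m : ℝ)) =O[atTop] fun m => Real.exp (a * m) := by
  refine IsBigO.of_bound' ?_
  filter_upwards [eventually_lt_of_limsup_lt h, eventually_gt_atTop 0] with m hm hm0
  have hlog : Real.log (u m) < a * m :=
    (div_lt_iff₀ (Nat.cast_pos.mpr hm0)).mp (EReal.coe_lt_coe_iff.mp hm)
  rw [Real.norm_natCast, Real.norm_of_nonneg (Real.exp_pos _).le]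
  rcases (u m).eq_zero_or_pos with h0 | h0
  · simp [h0, (Real.exp_pos _).le]
  · exact (Real.log_le_iff_le_exp (Nat.cast_pos.mpr h0)).mp hlog.le

lemma growthRate_le_of_isBigO {u : ℕ → ℕ} {a : ℝ} (ha : 0 ≤ a)
    (h : (fun m => (u m : ℝ)) =O[atTop] fun m => Real.exp (a * m)) : growthRate u ≤ a := by
  obtain ⟨c, hc, hbound⟩ := h.exists_pos
  refine EReal.le_of_forall_lt_iff_le.mp fun b hb => ?_
  have hab : a < b := EReal.coe_lt_coe_iff.mp hb
  have hlim : Tendsto (fun m : ℕ => Real.log c / m + a) atTop (nhds (0 + a)) :=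
    (tendsto_const_div_atTop_nhds_zero_nat _).add_const a
  refine limsup_le_of_le (by isBoundedDefault) ?_
  filter_upwards [hbound.bound, hlim.eventually (gt_mem_nhds (by simpa using hab)),
    eventually_gt_atTop 0] with m hm hlt hm0
  have hm0' : (0 : ℝ) < m := Nat.cast_pos.mpr hm0
  rw [EReal.coe_le_coe_iff]
  rcases (u m).eq_zero_or_pos with h0 | h0
  · simp only [h0, Nat.cast_zero, Real.log_zero, zero_div]
    linarith
  · rw [Real.norm_natCast, Real.norm_of_nonneg (Real.exp_pos _).le] at hm
    have hlog : Real.log (u m) ≤ Real.log c + a * m := by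
      rw [← Real.log_exp (a * m), ← Real.log_mul hc.ne' (Real.exp_pos _).ne']
      exact Real.log_le_log (Nat.cast_pos.mpr h0) hm
    rw [div_le_iff₀ hm0']
    calc Real.log (u m) ≤ Real.log c + a * m := hlog
      _ = (Real.log c / m + a) * m := by field_simp
      _ ≤ b * m := by gcongr

lemma growthRate_le_of_forall_isBigO {u : ℕ → ℕ} {r : EReal} (hr : 0 ≤ r)
    (h : ∀ a : ℝ, r < a → (fun m => (u m : ℝ)) =O[atTop] fun m => Real.exp (a * m)) :
    growthRate u ≤ r :=
  EReal.le_of_forall_lt_iff_le.mp fun a ha =>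
    growthRate_le_of_isBigO (EReal.coe_nonneg.mp (hr.trans ha.le)) (h a ha)

lemma isBigO_exp_of_le_shift {u : ℕ → ℕ} {v : ℕ → ℝ} {a : ℝ} (C : ℕ)
    (h : ∀ᶠ m in atTop, (u m : ℝ) ≤ v (m + C))
    (hv : v =O[atTop] fun m => Real.exp (a * m)) :
    (fun m => (u m : ℝ)) =O[atTop] fun m => Real.exp (a * m) := by
  have hshift : (fun m => v (m + C)) =O[atTop] fun m => Real.exp (a * C) * Real.exp (a * m) := by
    refine (hv.comp_tendsto (tendsto_add_atTop_nat C)).congr_right fun m => ?_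
    simp only [Function.comp_apply, Nat.cast_add, mul_add, Real.exp_add, mul_comm]
  refine (IsBigO.of_bound' ?_).trans (hshift.trans (isBigO_const_mul_self _ _ _))
  filter_upwards [h] with m hm
  rw [Real.norm_natCast]
  exact hm.trans (Real.le_norm_self _)

theorem stmt18_general (A : ℕ+ → ℕ+ → Bool) (M : ℕ)
    (hUCF : ∀ j : ℕ+, {i : ℕ+ | A i j = true}.encard ≤ M)
    (hmix : ∀ i j : ℕ+, ∃ N : ℕ, ∀ m : ℕ, N ≤ m →
      ∃ w : List ℕ+, w.length = m + 1 ∧ Adm A w ∧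
        w.head? = some i ∧ w.getLast? = some j)
    (J : ℕ+)
    (NJ : ℕ+) (hNJ : IsLeast {j₀ : ℕ+ | ∀ j : ℕ+, j₀ ≤ j → A J j = true} NJ)
    (n : ℕ+) :
    Filter.limsup (fun m : ℕ =>
        ((Real.log ((LWords A m n).ncard) / (m : ℝ) : ℝ) : EReal)) Filter.atTop
      ≤ (⨆ j : ℕ+, ⨆ _ : j ≤ n,
          Filter.limsup (fun m : ℕ =>
            ((Real.log ((Loops A m j).ncard) / (m : ℝ) : ℝ) : EReal)) Filter.atTop)
        + Filter.limsup (fun m : ℕ =>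
            ((Real.log (ISup A n m) / (m : ℝ) : ℝ) : EReal)) Filter.atTop := by
  have hcol : ∀ j : ℕ+, {i : ℕ+ | A i j = true}.Finite := fun j =>
    Set.finite_of_encard_le_coe (hUCF j)
  obtain ⟨C, hbridge⟩ := exists_bridge hmix hNJ.1 n
  set S := ⨆ j : ℕ+, ⨆ _ : j ≤ n, growthRate fun m => (Loops A m j).ncard
  have hS : 0 ≤ S := le_iSup₂_of_le 1 one_le (growthRate_nonneg _)
  have hL : growthRate (fun m => (LWords A m n).ncard) ≤ S := by
    refine growthRate_le_of_forall_isBigO hS fun a ha => isBigO_exp_of_le_shift C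
      (v := ∑ j ∈ Finset.Iic n, fun m => ((Loops A m j).ncard : ℝ)) ?_ ?_
    · filter_upwards [eventually_gt_atTop 0] with m hm
      rw [Finset.sum_apply]
      exact_mod_cast ncard_LWords_le_sum_ncard_Loops hcol hbridge hm
    · refine IsBigO.sum fun j hj => isBigO_exp_of_growthRate_lt (lt_of_le_of_lt ?_ ha)
      exact le_iSup₂ (f := fun j (_ : j ≤ n) => growthRate fun m => (Loops A m j).ncard) j
        (Finset.mem_Iic.mp hj)
  exact hL.trans (le_add_of_nonneg_right (growthRate_nonneg _))

/-- let `A` be uniformly column finite and topologically mixing, and let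
`J` be an `A`-infinite emitter (i.e. `{i : A(J,i) = 0}` is finite), with `N_J` the least
`j₀` such that `A(J,j) = 1` for all `j ≥ j₀`.  Then for every `n ≥ N_J`,
`limsup_m (1/m)·log |L(m,n)| ≤ max_{1≤j≤n} limsup_m (1/m)·log ℓ_m(j)
  + limsup_m (1/m)·log I(m,n)`, the right-hand limits superior being taken in the
extended reals. -/
theorem stmt18 (A : ℕ+ → ℕ+ → Bool) (M : ℕ)
    (hUCF : ∀ j : ℕ+, {i : ℕ+ | A i j = true}.encard ≤ M)
    (hmix : ∀ i j : ℕ+, ∃ N : ℕ, ∀ m : ℕ, N ≤ m →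
      ∃ w : List ℕ+, w.length = m + 1 ∧ Adm A w ∧
        w.head? = some i ∧ w.getLast? = some j)
    (J : ℕ+) (hJ : {i : ℕ+ | A J i = false}.Finite)
    (NJ : ℕ+) (hNJ : IsLeast {j₀ : ℕ+ | ∀ j : ℕ+, j₀ ≤ j → A J j = true} NJ)
    (n : ℕ+) (hn : NJ ≤ n) :
    Filter.limsup (fun m : ℕ =>
        ((Real.log ((LWords A m n).ncard) / (m : ℝ) : ℝ) : EReal)) Filter.atTop
      ≤ (⨆ j : ℕ+, ⨆ _ : j ≤ n,
          Filter.limsup (fun m : ℕ =>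
            ((Real.log ((Loops A m j).ncard) / (m : ℝ) : ℝ) : EReal)) Filter.atTop)
        + Filter.limsup (fun m : ℕ =>
            ((Real.log (ISup A n m) / (m : ℝ) : ℝ) : EReal)) Filter.atTop :=
  stmt18_general A M hUCF hmix J NJ hNJ n
end

section
/- Let A be a 0-1 matrix over the positive integers that is uniformly column finite, let n be a positive integer such that L(m,n) is nonempty for every m ≥ 1, let P ≥ 1 be a real number, and let h, I', D' be real numbers such that liminf_{m→∞} (1/m)·log |L(m,n)| ≥ h, limsup_{m→∞} (1/m)·log |L(m,n)| ≤ h + I', and limsup_{m→∞} (1/m)·log D(m,n) ≤ D', where D(m,n) := max_{1≤p≤m−1} ( |L_p(m,n)|·|L(m−p,n)| / |L(m,n)| ) for m ≥ 2 and D(1,n) := 1. Then, setting |L_0(m,n)| := 1, one has limsup_{m→∞} (1/m)·log ( Σ_{p=0}^{m} |L_{m−p}(m,n)|·P^p ) ≤ max{h, log P} + I' + D'. -/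
/-- The distortion quantity
`D(m,n) = max_{1≤p≤m−1} (|L_p(m,n)|·|L(m−p,n)| / |L(m,n)|)` for `m ≥ 2`,
and `D(1,n) := 1`. -/
noncomputable def Dq (A : ℕ+ → ℕ+ → Bool) (n : ℕ+) (m : ℕ) : ℝ :=
  if h : 2 ≤ m then
    (Finset.Icc 1 (m - 1)).sup' (Finset.nonempty_Icc.mpr (by omega))
      (fun p => (((LPref A p m n).ncard : ℝ) * ((LWords A (m - p) n).ncard : ℝ))
        / ((LWords A m n).ncard : ℝ))
  else 1

open Filter Real

lemma eventually_le_mul_of_limsup_div_lt {u : ℕ → ℝ} {b : ℝ}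
    (hbdd : IsBoundedUnder (· ≤ ·) atTop fun m : ℕ => u m / m)
    (hlt : limsup (fun m : ℕ => u m / m) atTop < b) : ∀ᶠ m : ℕ in atTop, u m ≤ m * b := by
  filter_upwards [eventually_lt_of_limsup_lt hlt hbdd, eventually_gt_atTop 0] with m hm hm0
  rw [div_lt_iff₀ (by exact_mod_cast hm0)] at hm
  linarith

lemma exists_mul_sub_le_of_lt_liminf_div {u : ℕ → ℝ} (hu : ∀ m, 0 ≤ u m) {b : ℝ}
    (hlt : b < liminf (fun m : ℕ => u m / m) atTop) : ∃ C, ∀ m : ℕ, m * b - C ≤ u m := by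
  have hbdd : IsBoundedUnder (· ≥ ·) atTop fun m : ℕ => u m / m :=
    isBoundedUnder_of ⟨0, fun m => div_nonneg (hu m) m.cast_nonneg⟩
  obtain ⟨N, hN⟩ := eventually_atTop.mp
    ((eventually_lt_of_lt_liminf hlt hbdd).and (eventually_gt_atTop 0))
  refine ⟨N * |b|, fun m => ?_⟩
  rcases lt_or_ge m N with hm | hm
  · have : (m : ℝ) * b ≤ N * |b| :=
      calc (m : ℝ) * b ≤ m * |b| := mul_le_mul_of_nonneg_left (le_abs_self b) m.cast_nonneg
        _ ≤ N * |b| := mul_le_mul_of_nonneg_right (by exact_mod_cast hm.le) (abs_nonneg b)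
    linarith [hu m]
  · obtain ⟨hlt, hpos⟩ := hN m hm
    rw [lt_div_iff₀ (by exact_mod_cast hpos)] at hlt
    nlinarith [abs_nonneg b, (N.cast_nonneg : (0 : ℝ) ≤ N)]

lemma eventually_log_add_one_add_le_mul (C : ℝ) {δ : ℝ} (hδ : 0 < δ) :
    ∀ᶠ m : ℕ in atTop, log (m + 1) + C ≤ m * δ := by
  have hlin : Tendsto (fun m : ℕ => (m : ℝ) + 1) atTop atTop :=
    tendsto_atTop_add_const_right _ 1 tendsto_natCast_atTop_atTop
  filter_upwards [(isLittleO_log_id_atTop.comp_tendsto hlin).bound (half_pos hδ),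
    hlin.eventually_ge_atTop ((2 * C + 2 * δ) / δ)] with m hlog hm
  simp only [Function.comp_apply, id, norm_eq_abs] at hlog
  rw [div_le_iff₀ hδ] at hm
  have := le_abs_self (log ((m : ℝ) + 1))
  rw [abs_of_pos (by positivity : (0 : ℝ) < m + 1)] at hlog
  nlinarith

lemma isBoundedUnder_log_div_of_le_pow {u : ℕ → ℝ} {K : ℝ} (hu : ∀ m, 0 < u m)
    (hK : ∀ m, u m ≤ K ^ m) : IsBoundedUnder (· ≤ ·) atTop fun m : ℕ => log (u m) / m := by
  refine isBoundedUnder_of_eventually_le (a := log K) ?_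
  filter_upwards [eventually_gt_atTop 0] with m hm
  rw [div_le_iff₀ (by exact_mod_cast hm), mul_comm, ← log_pow]
  exact log_le_log (hu m) (hK m)

lemma mul_pow_le_exp {a ℓp ℓm d P : ℝ} (p : ℕ) (hℓp : 0 < ℓp) (hℓm : 0 < ℓm) (hd : 0 < d)
    (hP : 0 < P) (ha : a * ℓp ≤ d * ℓm) :
    a * P ^ p ≤ exp (log d + log ℓm - log ℓp + p * log P) := by
  rw [exp_add, exp_sub, exp_add, exp_log hd, exp_log hℓm, exp_log hℓp, exp_nat_mul, exp_log hP]
  exact mul_le_mul_of_nonneg_right ((le_div_iff₀ hℓp).mpr ha) (by positivity)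

lemma log_sum_range_le {f : ℕ → ℝ} {m : ℕ} {x : ℝ}
    (hpos : 0 < ∑ p ∈ Finset.range (m + 1), f p)
    (hf : ∀ p ∈ Finset.range (m + 1), f p ≤ exp x) :
    log (∑ p ∈ Finset.range (m + 1), f p) ≤ log (m + 1) + x := by
  have hsum : ∑ p ∈ Finset.range (m + 1), f p ≤ (m + 1) * exp x := by
    simpa using Finset.sum_le_card_nsmul _ _ _ hf
  calc log (∑ p ∈ Finset.range (m + 1), f p) ≤ log ((m + 1) * exp x) := log_le_log hpos hsum
    _ = log (m + 1) + x := by rw [log_mul (by positivity) (exp_pos _).ne', log_exp]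

theorem limsup_log_sum_le {ℓ d : ℕ → ℝ} {a : ℕ → ℕ → ℝ} {P h I' D' : ℝ}
    (hℓ : ∀ m, 1 ≤ ℓ m)
    (hℓbdd : IsBoundedUnder (· ≤ ·) atTop fun m : ℕ => log (ℓ m) / m)
    (hdbdd : IsBoundedUnder (· ≤ ·) atTop fun m : ℕ => log (d m) / m)
    (ha_nonneg : ∀ m p, 0 ≤ a m p) (ha_diag : ∀ m, 1 ≤ a m m)
    (ha : ∀ m p, p ≤ m → a m p * ℓ p ≤ d m * ℓ m) (hP : 1 ≤ P)
    (hlow : h ≤ liminf (fun m : ℕ => log (ℓ m) / m) atTop)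
    (hupp : limsup (fun m : ℕ => log (ℓ m) / m) atTop ≤ h + I')
    (hD : limsup (fun m : ℕ => log (d m) / m) atTop ≤ D') :
    limsup (fun m : ℕ => log (∑ p ∈ Finset.range (m + 1), a m p * P ^ p) / m) atTop
      ≤ max h (log P) + I' + D' := by
  set E := max h (log P) + I' + D' with hE
  have hℓ0 : ∀ m, 0 < ℓ m := fun m => one_pos.trans_le (hℓ m)
  have hd : ∀ m, 0 < d m := fun m => by nlinarith [ha m m le_rfl, hℓ m, ha_diag m]
  have hS : ∀ m, 1 ≤ ∑ p ∈ Finset.range (m + 1), a m p * P ^ p := fun m =>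
    calc 1 ≤ a m m * P ^ m := one_le_mul_of_one_le_of_one_le (ha_diag m) (one_le_pow₀ hP)
      _ ≤ _ := Finset.single_le_sum (fun p _ => mul_nonneg (ha_nonneg m p) (by positivity))
          (Finset.self_mem_range_succ m)
  refine le_of_forall_pos_le_add fun ε hε => limsup_le_of_le
    (isCoboundedUnder_le_of_le atTop fun m => div_nonneg (log_nonneg (hS m)) m.cast_nonneg) ?_
  set δ := ε / 4 with hδε
  have hδ : 0 < δ := by positivity
  obtain ⟨C, hC⟩ := exists_mul_sub_le_of_lt_liminf_div (fun m => log_nonneg (hℓ m))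
    (b := h - δ) (by linarith)
  filter_upwards [eventually_le_mul_of_limsup_div_lt hℓbdd (b := h + I' + δ) (by linarith),
    eventually_le_mul_of_limsup_div_lt hdbdd (b := D' + δ) (by linarith),
    eventually_log_add_one_add_le_mul C hδ, eventually_gt_atTop 0] with m hℓm hdm htail hm
  have hterm : ∀ p ∈ Finset.range (m + 1), a m p * P ^ p ≤ exp (C + m * (E + 3 * δ)) := by
    intro p hp
    have hpm : (p : ℝ) ≤ m := by exact_mod_cast Finset.mem_range_succ_iff.mp hp
    have hexp : (p : ℝ) * (log P - h + δ) ≤ m * (max h (log P) - h + δ) := by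
      nlinarith [le_max_left h (log P), le_max_right h (log P), (p.cast_nonneg : (0 : ℝ) ≤ p)]
    refine (mul_pow_le_exp p (hℓ0 p) (hℓ0 m) (hd m) (one_pos.trans_le hP)
      (ha m p (by exact_mod_cast hpm))).trans (exp_le_exp.mpr ?_)
    linarith [hC p]
  rw [div_le_iff₀ (by exact_mod_cast hm)]
  calc log (∑ p ∈ Finset.range (m + 1), a m p * P ^ p) ≤ log (m + 1) + (C + m * (E + 3 * δ)) :=
        log_sum_range_le (one_pos.trans_le (hS m)) hterm
    _ ≤ (E + ε) * m := by rw [hδε] at htail ⊢; linarith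

section Words

variable {A : ℕ+ → ℕ+ → Bool} {n : ℕ+}

lemma lWords_zero : LWords A 0 n = {[]} := by
  ext w
  simp only [LWords, Set.mem_ofPred_eq, List.length_eq_zero_iff, Set.mem_singleton_iff]
  exact ⟨fun h => h.1, by rintro rfl; exact ⟨rfl, List.isChain_nil, by simp⟩⟩

lemma lWords_one_subset : LWords A 1 n ⊆ (fun a => [a]) '' Set.Iic n := by
  rintro w ⟨hlen, -, hlast⟩
  obtain ⟨a, rfl⟩ := List.length_eq_one_iff.mp hlen
  exact ⟨a, hlast a rfl, rfl⟩

lemma lWords_succ_subset {m : ℕ} (hm : 1 ≤ m) :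
    LWords A (m + 1) n ⊆ ⋃ t ∈ LWords A m n, (· :: t) '' {a | A a t.headI = true} := by
  rintro (_ | ⟨a, t⟩) ⟨hlen, hadm, hlast⟩
  · simp at hlen
  obtain ⟨b, t, rfl⟩ := List.exists_cons_of_length_pos (by simp at hlen; omega : 0 < t.length)
  refine Set.mem_biUnion (x := b :: t) ⟨by simpa using hlen, hadm.tail, fun x hx => hlast x ?_⟩
    ⟨a, (List.isChain_cons_cons.mp hadm).1, rfl⟩
  rwa [List.getLast?_cons_cons]

lemma encard_lWords_le {M : ℕ} (hUCF : ∀ j : ℕ+, {i : ℕ+ | A i j = true}.encard ≤ M) (m : ℕ) :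
    (LWords A m n).encard ≤ ((n : ℕ) + M) ^ m := by
  induction m with
  | zero => simp [lWords_zero]
  | succ m ih =>
    rcases Nat.eq_zero_or_pos m with rfl | hm
    · calc (LWords A 1 n).encard ≤ (Set.Iic n).encard :=
            (Set.encard_le_encard lWords_one_subset).trans (Set.encard_image_le _ _)
        _ = n := by
            rw [← Set.Icc_bot, PNat.bot_eq_one, ← Finset.coe_Icc, Set.encard_coe_eq_coe_finsetCard,
              PNat.card_Icc]
            simp
        _ ≤ ((n : ℕ) + M : ℕ∞) ^ (0 + 1) := by simp
    · have hfin : (LWords A m n).Finite := Set.finite_of_encard_le_coe (by exact_mod_cast ih)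
      calc (LWords A (m + 1) n).encard
          ≤ (⋃ t ∈ hfin.toFinset, (· :: t) '' {a | A a t.headI = true}).encard :=
            Set.encard_le_encard (by simpa using lWords_succ_subset hm)
        _ ≤ ∑ t ∈ hfin.toFinset, ((· :: t) '' {a | A a t.headI = true}).encard :=
            Finset.set_encard_biUnion_le _ _
        _ ≤ ∑ t ∈ hfin.toFinset, (M : ℕ∞) :=
            Finset.sum_le_sum fun t _ => (Set.encard_image_le _ _).trans (hUCF _)
        _ = (LWords A m n).encard * M := by
            rw [Finset.sum_const, nsmul_eq_mul, ← Set.encard_coe_eq_coe_finsetCard,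
              hfin.coe_toFinset]
        _ ≤ ((n : ℕ) + M) ^ m * ((n : ℕ) + M) := by gcongr; exact le_add_self
        _ = ((n : ℕ) + M) ^ (m + 1) := (pow_succ _ _).symm

lemma finite_and_ncard_lWords_le {M : ℕ}
    (hUCF : ∀ j : ℕ+, {i : ℕ+ | A i j = true}.encard ≤ M) (m : ℕ) :
    (LWords A m n).Finite ∧ (LWords A m n).ncard ≤ ((n : ℕ) + M) ^ m :=
  Set.encard_le_coe_iff_finite_ncard_le.mp (by exact_mod_cast encard_lWords_le hUCF m)

lemma lPref_eq_image {p m : ℕ} (hpm : p ≤ m) : LPref A p m n = List.take p '' LWords A m n := by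
  ext u
  constructor
  · rintro ⟨hlen, w, hw, hpre⟩
    exact ⟨w, hw, by rw [List.prefix_iff_eq_take.mp hpre, hlen]⟩
  · rintro ⟨w, hw, rfl⟩
    exact ⟨by simp [hw.1, hpm], w, hw, List.take_prefix _ _⟩

lemma lPref_self (m : ℕ) : LPref A m m n = LWords A m n := by
  rw [lPref_eq_image le_rfl]
  refine (Set.image_congr fun w hw => List.take_of_length_le hw.1.le).trans (Set.image_id' _)

lemma drop_mem_lWords {m : ℕ} {w : List ℕ+} (hw : w ∈ LWords A m n) (q : ℕ) :
    w.drop q ∈ LWords A (m - q) n := by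
  obtain ⟨hlen, hadm, hlast⟩ := hw
  refine ⟨by simp [hlen], hadm.drop q, fun x hx => hlast x ?_⟩
  rw [List.getLast?_drop] at hx
  split_ifs at hx
  · simp at hx
  · exact hx

variable (hfin : ∀ m, (LWords A m n).Finite)
include hfin

lemma ncard_lPref_le {p m : ℕ} (hpm : p ≤ m) : (LPref A p m n).ncard ≤ (LWords A m n).ncard := by
  rw [lPref_eq_image hpm]
  exact Set.ncard_image_le (hfin m)

lemma ncard_lWords_le_mul {m : ℕ} (q : ℕ) (hqm : q ≤ m) :
    (LWords A m n).ncard ≤ (LPref A q m n).ncard * (LWords A (m - q) n).ncard := by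
  have hpref : (LPref A q m n).Finite := lPref_eq_image (n := n) hqm ▸ (hfin m).image _
  rw [← Set.ncard_prod]
  refine Set.ncard_le_ncard_of_injOn (fun w => (w.take q, w.drop q)) ?_ ?_ (hpref.prod (hfin _))
  · intro w hw
    exact ⟨lPref_eq_image hqm ▸ Set.mem_image_of_mem _ hw, drop_mem_lWords hw q⟩
  · intro w _ w' _ hww
    rw [← List.take_append_drop q w, ← List.take_append_drop q w']
    simp only [Prod.mk.injEq] at hww
    rw [hww.1, hww.2]

end Words

section Distortion

variable {A : ℕ+ → ℕ+ → Bool} {n : ℕ+} {m : ℕ}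

lemma ncard_lPref_mul_le_dq_mul (hpos : 0 < (LWords A m n).ncard) {q : ℕ} (hq : 1 ≤ q)
    (hqm : q < m) :
    ((LPref A q m n).ncard : ℝ) * (LWords A (m - q) n).ncard ≤ Dq A n m * (LWords A m n).ncard := by
  rw [Dq, dif_pos (by omega), ← div_le_iff₀ (by exact_mod_cast hpos)]
  exact Finset.le_sup' (fun p => ((LPref A p m n).ncard : ℝ) * (LWords A (m - p) n).ncard
    / (LWords A m n).ncard) (Finset.mem_Icc.mpr ⟨hq, by omega⟩)

variable (hfin : ∀ m, (LWords A m n).Finite) (hpos : 0 < (LWords A m n).ncard)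
include hfin hpos

lemma one_le_dq : 1 ≤ Dq A n m := by
  by_cases hm : 2 ≤ m
  · have hsplit :
        ((LWords A m n).ncard : ℝ) ≤ (LPref A 1 m n).ncard * (LWords A (m - 1) n).ncard := by
      exact_mod_cast ncard_lWords_le_mul hfin 1 (by omega)
    have := hsplit.trans (ncard_lPref_mul_le_dq_mul hpos le_rfl (by omega))
    exact le_of_mul_le_mul_right (by simpa using this) (by exact_mod_cast hpos)
  · simp [Dq, hm]

lemma dq_le_pow {K : ℝ} (hK1 : 1 ≤ K) (hK : ∀ k, ((LWords A k n).ncard : ℝ) ≤ K ^ k) :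
    Dq A n m ≤ K ^ m := by
  by_cases hm : 2 ≤ m
  · rw [Dq, dif_pos hm]
    refine Finset.sup'_le _ _ fun q hq => ?_
    have hqm : q ≤ m := by have := Finset.mem_Icc.mp hq; omega
    have hpref : ((LPref A q m n).ncard : ℝ) ≤ (LWords A m n).ncard := by
      exact_mod_cast ncard_lPref_le hfin hqm
    calc ((LPref A q m n).ncard : ℝ) * (LWords A (m - q) n).ncard / (LWords A m n).ncard
        ≤ (LWords A (m - q) n).ncard := by
          rw [div_le_iff₀ (by exact_mod_cast hpos), mul_comm]
          exact mul_le_mul_of_nonneg_left hpref (by positivity)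
      _ ≤ K ^ (m - q) := hK _
      _ ≤ K ^ m := pow_le_pow_right₀ hK1 (by omega)
  · simpa [Dq, hm] using one_le_pow₀ hK1

lemma term_mul_ncard_le_dq_mul {p : ℕ} (hpm : p ≤ m) :
    (if p = m then (1 : ℝ) else (LPref A (m - p) m n).ncard) * (LWords A p n).ncard
      ≤ Dq A n m * (LWords A m n).ncard := by
  have hdq := one_le_dq hfin hpos
  have hℓ : (0 : ℝ) ≤ (LWords A m n).ncard := by positivity
  split_ifs with hp
  · subst hp; nlinarith
  · rcases Nat.eq_zero_or_pos p with rfl | hp0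
    · simp only [Nat.sub_zero, lPref_self, lWords_zero, Set.ncard_singleton, Nat.cast_one, mul_one]
      nlinarith
    · have := ncard_lPref_mul_le_dq_mul hpos (q := m - p) (by omega) (by omega)
      rwa [Nat.sub_sub_self hpm] at this

end Distortion

/-- let `A` be uniformly column finite, `n` such that `L(m,n)` is nonempty
for every `m ≥ 1`, `P ≥ 1`, and `h, I', D'` real numbers such that
`liminf_m (1/m)·log |L(m,n)| ≥ h`, `limsup_m (1/m)·log |L(m,n)| ≤ h + I'`, and
`limsup_m (1/m)·log D(m,n) ≤ D'`.  Then, setting `|L_0(m,n)| := 1`,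
`limsup_m (1/m)·log (Σ_{p=0}^{m} |L_{m−p}(m,n)|·P^p) ≤ max{h, log P} + I' + D'`. -/
theorem stmt19 (A : ℕ+ → ℕ+ → Bool) (M : ℕ)
    (hUCF : ∀ j : ℕ+, {i : ℕ+ | A i j = true}.encard ≤ M)
    (n : ℕ+) (hne : ∀ m : ℕ, 1 ≤ m → (LWords A m n).Nonempty)
    (P : ℝ) (hP : 1 ≤ P) (h I' D' : ℝ)
    (hlow : h ≤ Filter.liminf (fun m : ℕ =>
      Real.log ((LWords A m n).ncard) / (m : ℝ)) Filter.atTop)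
    (hupp : Filter.limsup (fun m : ℕ =>
      Real.log ((LWords A m n).ncard) / (m : ℝ)) Filter.atTop ≤ h + I')
    (hD : Filter.limsup (fun m : ℕ =>
      Real.log (Dq A n m) / (m : ℝ)) Filter.atTop ≤ D') :
    Filter.limsup (fun m : ℕ =>
        Real.log (∑ p ∈ Finset.range (m + 1),
          (if p = m then (1 : ℝ) else ((LPref A (m - p) m n).ncard : ℝ)) * P ^ p)
          / (m : ℝ)) Filter.atTop
      ≤ max h (Real.log P) + I' + D' := by
  have hbound := finite_and_ncard_lWords_le (n := n) hUCF
  have hfin : ∀ m, (LWords A m n).Finite := fun m => (hbound m).1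
  have hpos : ∀ m, 0 < (LWords A m n).ncard := by
    intro m
    rcases Nat.eq_zero_or_pos m with rfl | hm
    · simp [lWords_zero]
    · exact (Set.ncard_pos (hfin m)).mpr (hne m hm)
  have hpos' : ∀ m, (0 : ℝ) < (LWords A m n).ncard := fun m => by exact_mod_cast hpos m
  have hK : ∀ m, ((LWords A m n).ncard : ℝ) ≤ ((n : ℕ) + M : ℝ) ^ m := fun m => by
    exact_mod_cast (hbound m).2
  have hK1 : (1 : ℝ) ≤ (n : ℕ) + M := by
    have : (1 : ℝ) ≤ (n : ℕ) := by exact_mod_cast n.pos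
    linarith [(M.cast_nonneg : (0 : ℝ) ≤ M)]
  refine limsup_log_sum_le (fun m => by exact_mod_cast hpos m)
    (isBoundedUnder_log_div_of_le_pow hpos' hK)
    (isBoundedUnder_log_div_of_le_pow (fun m => one_pos.trans_le (one_le_dq hfin (hpos m)))
      fun m => dq_le_pow hfin (hpos m) hK1 hK)
    (fun m p => by split_ifs <;> positivity) (fun m => by simp)
    (fun m p hpm => term_mul_ncard_le_dq_mul hfin (hpos m) hpm) hP hlow hupp hD
end
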